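/- arXiv:2310.15444 — 2 statements merged into one kernel-verified Lean document; each statement's English description precedes it below -/
import Mathlib

section
/- Let Z be a measurable space, H a measurable hypothesis space, μ a probability measure on Z, N ≥ 1 an integer, M > 0, and l : H × Z → [0, M] a measurable loss. Let A be a Markov kernel from Z^N to H that is (ε, δ)-differentially private with ε ≥ 0 and δ ≥ 0. Then the expected generalization gap satisfies E_{S∼μ^{⊗N}} E_{h∼A(S)}[R(h) − R̂_S(h)] ≤ M·(1 − e^{−ε} + e^{−ε}·δ). -/
open MeasureTheory ProbabilityTheory

/-- Two datasets `S, S' ∈ Z^N` are neighboring if they differ in at most one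
coordinate. -/
def Neighboring {Z : Type*} {N : ℕ} (S S' : Fin N → Z) : Prop :=
  ∃ i : Fin N, ∀ j : Fin N, j ≠ i → S j = S' j

/-- A randomized algorithm is `(ε,δ)`-differentially private if for all
neighboring datasets `S, S'` and every measurable set `E` of outputs,
`P(A(S) ∈ E) ≤ e^ε · P(A(S') ∈ E) + δ`. -/
def IsDP {Z : Type*} [MeasurableSpace Z] {N : ℕ} {Ω : Type*} [MeasurableSpace Ω]
    (A : (Fin N → Z) → Measure Ω) (ε δ : ℝ) : Prop :=
  ∀ S S' : Fin N → Z, Neighboring S S' → ∀ E : Set Ω, MeasurableSet E →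
    A S E ≤ ENNReal.ofReal (Real.exp ε) * A S' E + ENNReal.ofReal δ

/-- The expected risk `R(h) = E_{z∼μ}[l(h,z)]`. -/
noncomputable def expRisk {Z H : Type*} [MeasurableSpace Z]
    (μ : Measure Z) (l : H → Z → ℝ) (h : H) : ℝ :=
  ∫ z, l h z ∂μ

/-- The empirical risk `R̂_S(h) = (1/N)·Σ_{i=1}^N l(h, z_i)`. -/
noncomputable def empRisk {Z H : Type*} {N : ℕ}
    (l : H → Z → ℝ) (S : Fin N → Z) (h : H) : ℝ :=
  (∑ i, l h (S i)) / N

/-!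
Write `G(S, z) = meanLoss A l S z` for the mean loss at `z` of a hypothesis drawn from `A(S)`.
The expected generalization gap is `T - (1/N) ∑ᵢ Uᵢ`, where `T = E_S E_z G(S, z)` and
`Uᵢ = E_S G(S, Sᵢ)`.
Resampling the `i`-th coordinate of `S ∼ μ^N` by a fresh `z ∼ μ` preserves the law, so
`Uᵢ = E_S E_z G(S[i ↦ z], z)`. Since `S` and `S[i ↦ z]` are neighbours, differential privacy
(extended from events to `[0, M]`-valued functions by the layer-cake formula) gives
`G(S, z) ≤ e^ε G(S[i ↦ z], z) + M δ`, hence `T ≤ e^ε Uᵢ + M δ`; together with `T ≤ M`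
this bounds `T - Uᵢ` by `M (1 - e^{-ε} + e^{-ε} δ)`.
-/

open Set Function
open scoped ENNReal

section Resampling

variable {ι : Type*} [Fintype ι] [DecidableEq ι] {X : ι → Type*} [∀ i, MeasurableSpace (X i)]
  {μ : ∀ i, Measure (X i)} [∀ i, IsProbabilityMeasure (μ i)]

theorem lintegral_pi_eq_lintegral_update (i : ι) {F : (∀ j, X j) → ℝ≥0∞} (hF : Measurable F) :
    ∫⁻ x, F x ∂Measure.pi μ = ∫⁻ x, ∫⁻ y, F (update x i y) ∂μ i ∂Measure.pi μ := by
  refine lintegral_eq_of_lmarginal_eq {i} hF (hF.comp measurable_update').lintegral_prod_right' ?_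
  simp only [lmarginal_singleton, update_idem, lintegral_const, measure_univ, mul_one]

theorem measurePreserving_update_pi (i : ι) :
    MeasurePreserving (fun p : (∀ j, X j) × X i => update p.1 i p.2)
      ((Measure.pi μ).prod (μ i)) (Measure.pi μ) := by
  refine ⟨measurable_update', Measure.ext_of_lintegral _ fun F hF => ?_⟩
  rw [lintegral_map hF measurable_update',
    lintegral_prod (fun p => F (update p.1 i p.2)) (hF.comp measurable_update').aemeasurable]
  exact (lintegral_pi_eq_lintegral_update i hF).symm

end Resampling

theorem integral_mem_Icc_of_forall_mem {α : Type*} [MeasurableSpace α] {ν : Measure α}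
    [IsProbabilityMeasure ν] {f : α → ℝ} {M : ℝ} (hf : ∀ x, f x ∈ Icc 0 M) :
    ∫ x, f x ∂ν ∈ Icc 0 M := by
  refine ⟨integral_nonneg fun x => (hf x).1, ?_⟩
  calc ∫ x, f x ∂ν ≤ ∫ _, M ∂ν :=
        integral_mono_of_nonneg (ae_of_all _ fun x => (hf x).1) (integrable_const M)
          (ae_of_all _ fun x => (hf x).2)
    _ = M := by simp

section BoundedFunctions

variable {Ω : Type*} [MeasurableSpace Ω] {ν ν' : Measure Ω} {f : Ω → ℝ} {M : ℝ}

theorem lintegral_le_mul_add_of_forall_measure_le {c d : ℝ≥0∞}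
    (h : ∀ E, MeasurableSet E → ν E ≤ c * ν' E + d) (hf : Measurable f)
    (hfM : ∀ ω, f ω ∈ Icc 0 M) :
    ∫⁻ ω, ENNReal.ofReal (f ω) ∂ν ≤
      c * ∫⁻ ω, ENNReal.ofReal (f ω) ∂ν' + ENNReal.ofReal M * d := by
  have hlevel :
      ∀ t, ν {ω | t < f ω} ≤ c * ν' {ω | t < f ω} + (Iic M).indicator (fun _ => d) t := by
    intro t
    by_cases ht : t ≤ M
    · simpa [indicator_of_mem (show t ∈ Iic M from ht)] using
        h _ (measurableSet_lt measurable_const hf)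
    · have hempty : {ω | t < f ω} = ∅ :=
        eq_empty_of_forall_notMem fun ω hω => ht (le_of_lt (lt_of_lt_of_le hω (hfM ω).2))
      simp [hempty]
  have hanti : Antitone fun t => ν' {ω | t < f ω} :=
    fun s t hst => measure_mono fun ω (hω : t < f ω) => lt_of_le_of_lt hst hω
  have hf0 : ∀ ρ : Measure Ω, 0 ≤ᵐ[ρ] f := fun ρ => ae_of_all _ fun ω => (hfM ω).1
  rw [lintegral_eq_lintegral_meas_lt ν (hf0 ν) hf.aemeasurable,
    lintegral_eq_lintegral_meas_lt ν' (hf0 ν') hf.aemeasurable]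
  calc ∫⁻ t in Ioi (0 : ℝ), ν {ω | t < f ω}
    _ ≤ ∫⁻ t in Ioi 0, (c * ν' {ω | t < f ω} + (Iic M).indicator (fun _ => d) t) :=
        lintegral_mono hlevel
    _ = c * (∫⁻ t in Ioi 0, ν' {ω | t < f ω}) +
          ∫⁻ t in Ioi 0, (Iic M).indicator (fun _ => d) t := by
        rw [lintegral_add_right _ (measurable_const.indicator measurableSet_Iic),
          lintegral_const_mul _ hanti.measurable]
    _ = c * (∫⁻ t in Ioi 0, ν' {ω | t < f ω}) + ENNReal.ofReal M * d := by
        rw [lintegral_indicator measurableSet_Iic, setLIntegral_const, Measure.restrict_apply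
            measurableSet_Iic, Iic_inter_Ioi, Real.volume_Ioc, sub_zero, mul_comm d]

theorem integral_le_mul_add_of_forall_measure_le [IsFiniteMeasure ν] [IsFiniteMeasure ν']
    {c d : ℝ} (hc : 0 ≤ c) (hd : 0 ≤ d)
    (h : ∀ E, MeasurableSet E → ν E ≤ ENNReal.ofReal c * ν' E + ENNReal.ofReal d)
    (hM : 0 ≤ M) (hf : Measurable f) (hfM : ∀ ω, f ω ∈ Icc 0 M) :
    ∫ ω, f ω ∂ν ≤ c * ∫ ω, f ω ∂ν' + M * d := by
  have hint : ∀ (ρ : Measure Ω) [IsFiniteMeasure ρ], Integrable f ρ :=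
    fun ρ _ => Integrable.of_mem_Icc 0 M hf.aemeasurable (ae_of_all _ hfM)
  have hf0 : ∀ ρ : Measure Ω, 0 ≤ᵐ[ρ] f := fun ρ => ae_of_all _ fun ω => (hfM ω).1
  have hfν' : 0 ≤ ∫ ω, f ω ∂ν' := integral_nonneg fun ω => (hfM ω).1
  rw [← ENNReal.ofReal_le_ofReal_iff (by positivity),
    ENNReal.ofReal_add (by positivity) (by positivity),
    ENNReal.ofReal_mul hc, ENNReal.ofReal_mul hM,
    ofReal_integral_eq_lintegral_ofReal (hint ν) (hf0 ν),
    ofReal_integral_eq_lintegral_ofReal (hint ν') (hf0 ν')]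
  exact lintegral_le_mul_add_of_forall_measure_le h hf hfM

end BoundedFunctions

theorem neighboring_update {Z : Type*} {N : ℕ} (S : Fin N → Z) (i : Fin N) (z : Z) :
    Neighboring S (update S i z) :=
  ⟨i, fun _ hj => (update_of_ne hj z S).symm⟩

section Loss

variable {X Z H : Type*} [MeasurableSpace X] [MeasurableSpace H] {l : H → Z → ℝ} {M : ℝ}

noncomputable def meanLoss (A : Kernel X H) (l : H → Z → ℝ) (S : X) (z : Z) : ℝ :=
  ∫ h, l h z ∂(A S)

theorem integrable_loss [MeasurableSpace Z] (hl : Measurable fun q : H × Z => l q.1 q.2)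
    (hlb : ∀ h z, l h z ∈ Icc 0 M) (ν : Measure H) [IsFiniteMeasure ν] (z : Z) :
    Integrable (fun h => l h z) ν :=
  Integrable.of_mem_Icc 0 M (hl.comp (measurable_id.prodMk measurable_const)).aemeasurable
    (ae_of_all _ fun h => hlb h z)

variable {A : Kernel X H} [IsMarkovKernel A]

theorem measurable_meanLoss [MeasurableSpace Z] (hl : Measurable fun q : H × Z => l q.1 q.2) :
    Measurable fun p : X × Z => meanLoss A l p.1 p.2 :=
  (StronglyMeasurable.integral_kernel_prod_right' (κ := A.prodMkRight Z)
    (hl.comp (measurable_snd.prodMk measurable_fst.snd)).stronglyMeasurable).measurable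

theorem meanLoss_mem_Icc (hlb : ∀ h z, l h z ∈ Icc 0 M) (S : X) (z : Z) :
    meanLoss A l S z ∈ Icc 0 M :=
  integral_mem_Icc_of_forall_mem fun h => hlb h z

theorem integral_expRisk_eq_integral_meanLoss [MeasurableSpace Z] (μ : Measure Z)
    [IsProbabilityMeasure μ]
    (hl : Measurable fun q : H × Z => l q.1 q.2) (hlb : ∀ h z, l h z ∈ Icc 0 M) (S : X) :
    ∫ h, expRisk μ l h ∂(A S) = ∫ z, meanLoss A l S z ∂μ :=
  integral_integral_swap
    (Integrable.of_mem_Icc 0 M hl.aemeasurable (ae_of_all _ fun q => hlb q.1 q.2))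

end Loss

section Dataset

variable {Z H : Type*} [MeasurableSpace Z] [MeasurableSpace H] {l : H → Z → ℝ} {M : ℝ}
  {N : ℕ} {A : Kernel (Fin N → Z) H} [IsMarkovKernel A]

theorem measurable_meanLoss_apply_self (hl : Measurable fun q : H × Z => l q.1 q.2)
    (i : Fin N) :
    Measurable fun S : Fin N → Z => meanLoss A l S (S i) :=
  (measurable_meanLoss hl).comp (measurable_id.prodMk (measurable_pi_apply i))

theorem integral_empRisk_eq_sum_meanLoss (hl : Measurable fun q : H × Z => l q.1 q.2)
    (hlb : ∀ h z, l h z ∈ Icc 0 M) (S : Fin N → Z) :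
    ∫ h, empRisk l S h ∂(A S) = (∑ i, meanLoss A l S (S i)) / N := by
  unfold empRisk
  rw [integral_div, integral_finsetSum _ fun i _ => integrable_loss hl hlb _ (S i)]
  rfl

theorem integral_expRisk_sub_empRisk_eq (μ : Measure Z) [IsProbabilityMeasure μ]
    (hl : Measurable fun q : H × Z => l q.1 q.2) (hlb : ∀ h z, l h z ∈ Icc 0 M) (S : Fin N → Z) :
    ∫ h, (expRisk μ l h - empRisk l S h) ∂(A S)
      = ∫ z, meanLoss A l S z ∂μ - (∑ i, meanLoss A l S (S i)) / N := by
  have hexp : Integrable (expRisk μ l) (A S) :=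
    Integrable.of_mem_Icc 0 M hl.stronglyMeasurable.integral_prod_right'.aemeasurable
      (ae_of_all _ fun h => integral_mem_Icc_of_forall_mem fun z => hlb h z)
  have hemp : Integrable (empRisk l S) (A S) :=
    (integrable_finsetSum _ fun i _ => integrable_loss hl hlb _ (S i)).div_const _
  rw [integral_sub hexp hemp, integral_expRisk_eq_integral_meanLoss μ hl hlb,
    integral_empRisk_eq_sum_meanLoss hl hlb]

theorem meanLoss_le_of_neighboring {ε δ : ℝ} (hδ : 0 ≤ δ) (hM : 0 ≤ M)
    (hl : Measurable fun q : H × Z => l q.1 q.2) (hlb : ∀ h z, l h z ∈ Icc 0 M)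
    (hDP : IsDP (fun S => A S) ε δ) {S S' : Fin N → Z} (hSS' : Neighboring S S') (z : Z) :
    meanLoss A l S z ≤ Real.exp ε * meanLoss A l S' z + M * δ :=
  integral_le_mul_add_of_forall_measure_le (Real.exp_pos ε).le hδ (hDP S S' hSS') hM
    (hl.comp (measurable_id.prodMk measurable_const)) fun h => hlb h z

theorem integral_integral_meanLoss_le (μ : Measure Z) [IsProbabilityMeasure μ] {ε δ : ℝ}
    (hδ : 0 ≤ δ) (hM : 0 ≤ M) (hl : Measurable fun q : H × Z => l q.1 q.2)
    (hlb : ∀ h z, l h z ∈ Icc 0 M) (hDP : IsDP (fun S => A S) ε δ) (i : Fin N) :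
    ∫ S, ∫ z, meanLoss A l S z ∂μ ∂(Measure.pi fun _ => μ)
      ≤ Real.exp ε * ∫ S, meanLoss A l S (S i) ∂(Measure.pi fun _ => μ) + M * δ := by
  set P := (Measure.pi fun _ : Fin N => μ).prod μ
  have hG := measurable_meanLoss (A := A) hl
  have hGupdate : Measurable fun p : (Fin N → Z) × Z => meanLoss A l (update p.1 i p.2) p.2 :=
    hG.comp (measurable_update'.prodMk measurable_snd)
  have hint :
      ∀ {F : (Fin N → Z) × Z → ℝ}, Measurable F → (∀ p, F p ∈ Icc 0 M) → Integrable F P :=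
    fun hF hFM => Integrable.of_mem_Icc 0 M hF.aemeasurable (ae_of_all _ hFM)
  have hGint := hint hG fun p => meanLoss_mem_Icc hlb _ _
  have hGupdate_int := hint hGupdate fun p => meanLoss_mem_Icc hlb _ _
  have hT : ∫ S, ∫ z, meanLoss A l S z ∂μ ∂(Measure.pi fun _ => μ)
      = ∫ p, meanLoss A l p.1 p.2 ∂P :=
    (integral_prod _ hGint).symm
  have hU : ∫ S, meanLoss A l S (S i) ∂(Measure.pi fun _ => μ)
      = ∫ p, meanLoss A l (update p.1 i p.2) p.2 ∂P := by
    rw [← (measurePreserving_update_pi (μ := fun _ => μ) i).map_eq,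
      integral_map measurable_update'.aemeasurable
        (measurable_meanLoss_apply_self hl i).aestronglyMeasurable]
    simp only [update_self]
    rfl
  rw [hT, hU]
  calc ∫ p, meanLoss A l p.1 p.2 ∂P
      ≤ ∫ p, (Real.exp ε * meanLoss A l (update p.1 i p.2) p.2 + M * δ) ∂P :=
        integral_mono hGint ((hGupdate_int.const_mul _).add (integrable_const _)) fun p =>
          meanLoss_le_of_neighboring hδ hM hl hlb hDP (neighboring_update p.1 i p.2) p.2
    _ = Real.exp ε * ∫ p, meanLoss A l (update p.1 i p.2) p.2 ∂P + M * δ := by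
        rw [integral_add (hGupdate_int.const_mul _) (integrable_const _), integral_const_mul,
          integral_const, probReal_univ, one_smul]

end Dataset

theorem sub_le_of_le_exp_mul_add {t u M ε δ : ℝ} (hε : 0 ≤ ε) (htM : t ≤ M)
    (htu : t ≤ Real.exp ε * u + M * δ) :
    t - u ≤ M * (1 - Real.exp (-ε) + Real.exp (-ε) * δ) := by
  have hexp : Real.exp (-ε) * Real.exp ε = 1 := by
    rw [← Real.exp_add, neg_add_cancel, Real.exp_zero]
  have hscaled : Real.exp (-ε) * t ≤ u + Real.exp (-ε) * (M * δ) := by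
    calc Real.exp (-ε) * t ≤ Real.exp (-ε) * (Real.exp ε * u + M * δ) :=
          mul_le_mul_of_nonneg_left htu (Real.exp_pos _).le
      _ = u + Real.exp (-ε) * (M * δ) := by rw [mul_add, ← mul_assoc, hexp, one_mul]
  have hle : 0 ≤ 1 - Real.exp (-ε) := sub_nonneg.2 (Real.exp_le_one_iff.2 (neg_nonpos.2 hε))
  nlinarith [mul_le_mul_of_nonneg_left htM hle]

theorem sub_sum_div_le_of_forall_sub_le {N : ℕ} (hN : 1 ≤ N) {t B : ℝ} {u : Fin N → ℝ}
    (h : ∀ i, t - u i ≤ B) : t - (∑ i, u i) / N ≤ B := by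
  have hN' : (0 : ℝ) < N := by exact_mod_cast hN
  rw [sub_le_comm, le_div_iff₀ hN']
  calc (t - B) * N = ∑ _i : Fin N, (t - B) := by
        rw [Finset.sum_const, Finset.card_univ, Fintype.card_fin, nsmul_eq_mul, mul_comm]
    _ ≤ ∑ i, u i := Finset.sum_le_sum fun i _ => sub_le_comm.1 (h i)

/-- if a Markov kernel `A` from `Z^N` to `H` is
`(ε,δ)`-differentially private with `ε ≥ 0`, `δ ≥ 0`, and the measurable loss
satisfies `0 ≤ l ≤ M`, then the expected generalization gap satisfies
`E_{S∼μ^{⊗N}} E_{h∼A(S)}[R(h) − R̂_S(h)] ≤ M·(1 − e^{−ε} + e^{−ε}·δ)`. -/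
theorem stmt3 {Z H : Type*} [MeasurableSpace Z] [MeasurableSpace H]
    (μ : Measure Z) [IsProbabilityMeasure μ]
    (N : ℕ) (hN : 1 ≤ N) (M : ℝ) (hM : 0 < M)
    (l : H → Z → ℝ)
    (hl : Measurable (fun q : H × Z => l q.1 q.2))
    (hlb : ∀ h z, l h z ∈ Set.Icc (0 : ℝ) M)
    (A : Kernel (Fin N → Z) H) [IsMarkovKernel A]
    (ε δ : ℝ) (hε : 0 ≤ ε) (hδ : 0 ≤ δ)
    (hDP : IsDP (fun S => A S) ε δ) :
    ∫ S, (∫ h, (expRisk μ l h - empRisk l S h) ∂(A S))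
        ∂(Measure.pi fun _ : Fin N => μ) ≤
      M * (1 - Real.exp (-ε) + Real.exp (-ε) * δ) := by
  have hT_mem : ∀ S, ∫ z, meanLoss A l S z ∂μ ∈ Icc 0 M :=
    fun S => integral_mem_Icc_of_forall_mem fun z => meanLoss_mem_Icc hlb S z
  have hT_int : Integrable (fun S => ∫ z, meanLoss A l S z ∂μ) (Measure.pi fun _ => μ) :=
    Integrable.of_mem_Icc 0 M
      (measurable_meanLoss hl).stronglyMeasurable.integral_prod_right'.aemeasurable
      (ae_of_all _ hT_mem)
  have hU_int : ∀ i, Integrable (fun S => meanLoss A l S (S i)) (Measure.pi fun _ => μ) :=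
    fun i => Integrable.of_mem_Icc 0 M (measurable_meanLoss_apply_self hl i).aemeasurable
      (ae_of_all _ fun S => meanLoss_mem_Icc hlb S (S i))
  rw [integral_congr_ae (ae_of_all _ (integral_expRisk_sub_empRisk_eq μ hl hlb)),
    integral_sub hT_int ((integrable_finsetSum _ fun i _ => hU_int i).div_const _),
    integral_div, integral_finsetSum _ fun i _ => hU_int i]
  exact sub_sum_div_le_of_forall_sub_le hN fun i => sub_le_of_le_exp_mul_add hε
    (integral_mem_Icc_of_forall_mem hT_mem).2
    (integral_integral_meanLoss_le μ hδ hM.le hl hlb hDP i)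
end

section
/- (Laplace mechanism.) Let Z be a measurable space, N ≥ 1, d ≥ 1, b > 0, and let f : Z^N → ℝ^d be a measurable map with ℓ1-sensitivity at most Δ, i.e. ‖f(S) − f(S')‖₁ ≤ Δ for all neighboring datasets S, S' ∈ Z^N. Then the Markov kernel sending S to the Laplace distribution Lap(f(S), b) on ℝ^d is (Δ/b, 0)-differentially private: for all neighboring S, S' and every measurable set E ⊆ ℝ^d, Lap(f(S), b)(E) ≤ e^{Δ/b}·Lap(f(S'), b)(E). -/
open MeasureTheory

/-- Density of the `d`-dimensional Laplace distribution `Lap(μ, b)` with respect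
to Lebesgue measure: `(2b)^{-d}·exp(−‖x−μ‖₁/b)`. -/
noncomputable def lapDensity (d : ℕ) (μ : Fin d → ℝ) (b : ℝ) (x : Fin d → ℝ) : ℝ :=
  ((2 * b) ^ d)⁻¹ * Real.exp (-(∑ i, |x i - μ i|) / b)

/-- The `d`-dimensional Laplace distribution `Lap(μ, b)` on `ℝ^d`. -/
noncomputable def lapMeasure (d : ℕ) (μ : Fin d → ℝ) (b : ℝ) : Measure (Fin d → ℝ) :=
  MeasureTheory.volume.withDensity (fun x => ENNReal.ofReal (lapDensity d μ b x))

/-!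
Shifting the centre of a Laplace density from `ν` to `μ` multiplies it pointwise by at most
`exp (‖μ - ν‖₁ / b)`, by the triangle inequality for the ℓ1-norm. A pointwise bound between
densities integrates to the same bound between the measures of every set, and for neighboring
datasets `‖f S - f S'‖₁ ≤ Δ`.
-/

lemma MeasureTheory.Measure.withDensity_le_smul_withDensity {α : Type*} [MeasurableSpace α]
    (μ : Measure α) {f g : α → ENNReal} {c : ENNReal} (hc : c ≠ ⊤) (hfg : ∀ x, f x ≤ c * g x) :
    μ.withDensity f ≤ c • μ.withDensity g := by
  rw [← withDensity_smul' c g hc]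
  exact withDensity_mono (ae_of_all _ hfg)

lemma lapDensity_le_exp_mul_lapDensity {d : ℕ} {b : ℝ} (hb : 0 < b) (μ ν x : Fin d → ℝ) :
    lapDensity d μ b x ≤ Real.exp ((∑ i, |μ i - ν i|) / b) * lapDensity d ν b x := by
  have hl1 : ∑ i, |x i - ν i| ≤ ∑ i, |x i - μ i| + ∑ i, |μ i - ν i| := by
    rw [← Finset.sum_add_distrib]
    exact Finset.sum_le_sum fun i _ => abs_sub_le _ _ _
  have hexp : -(∑ i, |x i - μ i|) / b ≤ (∑ i, |μ i - ν i|) / b + -(∑ i, |x i - ν i|) / b := by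
    rw [← add_div, div_le_div_iff_of_pos_right hb]
    linarith
  calc lapDensity d μ b x
      ≤ ((2 * b) ^ d)⁻¹ * Real.exp ((∑ i, |μ i - ν i|) / b + -(∑ i, |x i - ν i|) / b) :=
        mul_le_mul_of_nonneg_left (Real.exp_le_exp.2 hexp) (by positivity)
    _ = Real.exp ((∑ i, |μ i - ν i|) / b) * lapDensity d ν b x := by
        rw [lapDensity, Real.exp_add]
        ring

lemma lapMeasure_le_smul_lapMeasure {d : ℕ} {b : ℝ} (hb : 0 < b) (μ ν : Fin d → ℝ) :
    lapMeasure d μ b ≤ ENNReal.ofReal (Real.exp ((∑ i, |μ i - ν i|) / b)) • lapMeasure d ν b := by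
  refine Measure.withDensity_le_smul_withDensity _ ENNReal.ofReal_ne_top fun x => ?_
  rw [← ENNReal.ofReal_mul (Real.exp_nonneg _)]
  exact ENNReal.ofReal_le_ofReal (lapDensity_le_exp_mul_lapDensity hb μ ν x)

theorem stmt5_general {Z : Type*} [MeasurableSpace Z] (N d : ℕ)
    (b : ℝ) (hb : 0 < b) (Δ : ℝ)
    (f : (Fin N → Z) → Fin d → ℝ)
    (hsens : ∀ S S' : Fin N → Z, Neighboring S S' →
      ∑ i, |f S i - f S' i| ≤ Δ) :
    IsDP (fun S => lapMeasure d (f S) b) (Δ / b) 0 := by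
  intro S S' hS E _
  have hexp : ENNReal.ofReal (Real.exp ((∑ i, |f S i - f S' i|) / b))
      ≤ ENNReal.ofReal (Real.exp (Δ / b)) :=
    ENNReal.ofReal_le_ofReal <| Real.exp_le_exp.2 <|
      div_le_div_of_nonneg_right (hsens S S' hS) hb.le
  calc lapMeasure d (f S) b E
      ≤ ENNReal.ofReal (Real.exp ((∑ i, |f S i - f S' i|) / b)) * lapMeasure d (f S') b E :=
        lapMeasure_le_smul_lapMeasure hb (f S) (f S') E
    _ ≤ ENNReal.ofReal (Real.exp (Δ / b)) * lapMeasure d (f S') b E + ENNReal.ofReal 0 := by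
        rw [ENNReal.ofReal_zero, add_zero]
        gcongr

/-- Laplace mechanism: if `f : Z^N → ℝ^d` is measurable with
ℓ1-sensitivity at most `Δ` over neighboring datasets, then the mechanism
`S ↦ Lap(f(S), b)` is `(Δ/b, 0)`-differentially private. -/
theorem stmt5 {Z : Type*} [MeasurableSpace Z] (N d : ℕ) (hN : 1 ≤ N) (hd : 1 ≤ d)
    (b : ℝ) (hb : 0 < b) (Δ : ℝ)
    (f : (Fin N → Z) → Fin d → ℝ) (hf : Measurable f)
    (hsens : ∀ S S' : Fin N → Z, Neighboring S S' →
      ∑ i, |f S i - f S' i| ≤ Δ) :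
    IsDP (fun S => lapMeasure d (f S) b) (Δ / b) 0 :=
  stmt5_general N d b hb Δ f hsens
end
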